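/- arXiv:2412.19239 — 3 statements merged into one kernel-verified Lean document; each statement's English description precedes it below -/
import Mathlib

section
/- Let n, m ∈ ℕ with n ≥ 1, m ≥ 2, let 0 < q_1 < ... < q_m < 1 be distinct reals, and let α_1, ..., α_m ∈ ℝ be not all zero. Let T be any trigonometric polynomial of degree at most n − 1. If the function K(t) − T(t), where K(t) = Σ_{i=1}^m α_i q_i sin t / (1 − 2 q_i cos t + q_i²), is not identically zero, then it has at most 2(n + m − 1) zeros (counted without multiplicity) in the half-open interval [0, 2π). -/
/-!
Multiplying by `P t = ∏ i, (1 - 2 q_i cos t + q_i ^ 2)`, which is positive since `0 < q_i < 1`,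
clears the denominators of `K` without changing the zero set. Each factor has degree one, so
`(K - T) P` is a trigonometric polynomial of degree at most `n + m - 1`, i.e. `e^{-idt} Q(e^{it})`
with `d = n + m - 1` and `deg Q ≤ 2d`. As `t ↦ e^{it}` is injective on `[0, 2π)`, its zeros there
inject into the roots of the nonzero polynomial `Q`.
-/

open Finset Real

open Polynomial in
/-- Real trigonometric polynomials of degree at most `d`, in the variable `z = e^{it}`. -/
def IsTrigPoly (d : ℕ) (F : ℝ → ℝ) : Prop :=
  ∃ Q : ℂ[X], Q.natDegree ≤ 2 * d ∧
    ∀ t : ℝ, (F t : ℂ) = Complex.exp (-(d * t * Complex.I)) * Q.eval (Complex.exp (t * Complex.I))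

namespace IsTrigPoly

open Polynomial

variable {d d₁ d₂ : ℕ} {F G : ℝ → ℝ}

theorem const (c : ℝ) : IsTrigPoly 0 fun _ => c :=
  ⟨C (c : ℂ), by simp, fun t => by simp⟩

theorem add (hF : IsTrigPoly d F) (hG : IsTrigPoly d G) : IsTrigPoly d fun t => F t + G t := by
  obtain ⟨Q₁, h₁, e₁⟩ := hF
  obtain ⟨Q₂, h₂, e₂⟩ := hG
  refine ⟨Q₁ + Q₂, (natDegree_add_le _ _).trans (max_le h₁ h₂), fun t => ?_⟩
  rw [Complex.ofReal_add, e₁, e₂, eval_add, mul_add]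

theorem const_mul (c : ℝ) (hF : IsTrigPoly d F) : IsTrigPoly d fun t => c * F t := by
  obtain ⟨Q, h, e⟩ := hF
  refine ⟨C (c : ℂ) * Q, natDegree_C_mul_le _ _ |>.trans h, fun t => ?_⟩
  rw [Complex.ofReal_mul, e, eval_mul, eval_C]
  ring

theorem mul (hF : IsTrigPoly d₁ F) (hG : IsTrigPoly d₂ G) :
    IsTrigPoly (d₁ + d₂) fun t => F t * G t := by
  obtain ⟨Q₁, h₁, e₁⟩ := hF
  obtain ⟨Q₂, h₂, e₂⟩ := hG
  refine ⟨Q₁ * Q₂, natDegree_mul_le.trans (by omega), fun t => ?_⟩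
  rw [Complex.ofReal_mul, e₁, e₂, eval_mul, Nat.cast_add, add_mul, add_mul, neg_add,
    Complex.exp_add]
  ring

theorem mono (h : d₁ ≤ d₂) (hF : IsTrigPoly d₁ F) : IsTrigPoly d₂ F := by
  obtain ⟨Q, hQ, e⟩ := hF
  refine ⟨Q * X ^ (d₂ - d₁), natDegree_mul_le.trans (by simp only [natDegree_X_pow]; omega),
    fun t => ?_⟩
  have hshift : Complex.exp (-(d₁ * t * Complex.I)) = Complex.exp (-(d₂ * t * Complex.I)) *
      Complex.exp (t * Complex.I) ^ (d₂ - d₁) := by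
    rw [← Complex.exp_nat_mul, ← Complex.exp_add, Nat.cast_sub h]
    ring_nf
  rw [e, hshift, eval_mul, eval_pow, eval_X]
  ring

theorem sum {ι : Type*} (s : Finset ι) {f : ι → ℝ → ℝ} (hf : ∀ i ∈ s, IsTrigPoly d (f i)) :
    IsTrigPoly d fun t => ∑ i ∈ s, f i t := by
  classical
  induction s using Finset.induction_on with
  | empty => simpa using (const 0).mono (Nat.zero_le d)
  | insert i s hi ih =>
    simp only [sum_insert hi]
    exact (hf i (mem_insert_self i s)).add (ih fun j hj => hf j (mem_insert_of_mem hj))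

theorem prod {ι : Type*} (s : Finset ι) {deg : ι → ℕ} {f : ι → ℝ → ℝ}
    (hf : ∀ i ∈ s, IsTrigPoly (deg i) (f i)) :
    IsTrigPoly (∑ i ∈ s, deg i) fun t => ∏ i ∈ s, f i t := by
  classical
  induction s using Finset.induction_on with
  | empty => simpa using const 1
  | insert i s hi ih =>
    simp only [sum_insert hi, prod_insert hi]
    exact (hf i (mem_insert_self i s)).mul (ih fun j hj => hf j (mem_insert_of_mem hj))

private theorem exp_neg_mul_exp_pow_two_mul (j : ℕ) (t : ℝ) :
    Complex.exp (-(j * t * Complex.I)) * Complex.exp (t * Complex.I) ^ (2 * j) =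
      Complex.exp (j * t * Complex.I) := by
  rw [← Complex.exp_nat_mul, ← Complex.exp_add]
  push_cast
  ring_nf

theorem cos_nat_mul (j : ℕ) : IsTrigPoly j fun t => cos (j * t) := by
  refine ⟨C (1 / 2) * (X ^ (2 * j) + 1), ?_, fun t => ?_⟩
  · refine (natDegree_C_mul_le _ _).trans ((natDegree_add_le _ _).trans ?_)
    simp
  · rw [Complex.ofReal_cos, Complex.cos]
    simp only [eval_mul, eval_C, eval_add, eval_pow, eval_X, eval_one]
    rw [mul_left_comm, mul_add, exp_neg_mul_exp_pow_two_mul]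
    push_cast
    ring_nf

theorem sin_nat_mul (j : ℕ) : IsTrigPoly j fun t => sin (j * t) := by
  refine ⟨C (Complex.I / 2) * (1 - X ^ (2 * j)), ?_, fun t => ?_⟩
  · refine (natDegree_C_mul_le _ _).trans ((natDegree_sub_le _ _).trans ?_)
    simp
  · rw [Complex.ofReal_sin, Complex.sin]
    simp only [eval_mul, eval_C, eval_sub, eval_pow, eval_X, eval_one]
    rw [mul_left_comm, mul_sub, exp_neg_mul_exp_pow_two_mul]
    push_cast
    ring_nf

end IsTrigPoly

theorem injOn_exp_mul_I_Ico :
    Set.InjOn (fun t : ℝ => Complex.exp (t * Complex.I)) (Set.Ico 0 (2 * π)) :=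
  Subtype.val_injective.comp_injOn (Circle.exp_injOn_Ico (by simp))

theorem IsTrigPoly.finite_zeros_and_ncard_le {d : ℕ} {F : ℝ → ℝ} (hF : IsTrigPoly d F)
    (hF0 : F ≠ 0) :
    {t ∈ Set.Ico (0 : ℝ) (2 * π) | F t = 0}.Finite ∧
      {t ∈ Set.Ico (0 : ℝ) (2 * π) | F t = 0}.ncard ≤ 2 * d := by
  obtain ⟨Q, hdeg, hQ⟩ := hF
  have hQ0 : Q ≠ 0 := by
    rintro rfl
    exact hF0 (funext fun t => by simpa using hQ t)
  have hmaps : Set.MapsTo (fun t : ℝ => Complex.exp (t * Complex.I))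
      {t ∈ Set.Ico (0 : ℝ) (2 * π) | F t = 0} Q.roots.toFinset := by
    rintro t ⟨-, ht⟩
    have := hQ t
    rw [ht, Complex.ofReal_zero, eq_comm, mul_eq_zero] at this
    simpa [hQ0] using this.resolve_left (Complex.exp_ne_zero _)
  have hinj := injOn_exp_mul_I_Ico.mono (Set.sep_subset (Set.Ico 0 (2 * π)) fun t => F t = 0)
  refine ⟨Set.Finite.of_injOn hmaps hinj (Finset.finite_toSet _), ?_⟩
  calc _ ≤ (Q.roots.toFinset : Set ℂ).ncard :=
        Set.ncard_le_ncard_of_injOn _ hmaps hinj (Finset.finite_toSet _)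
    _ = Q.roots.toFinset.card := Set.ncard_coe_finset _
    _ ≤ Multiset.card Q.roots := Multiset.toFinset_card_le _
    _ ≤ Q.natDegree := Q.card_roots'
    _ ≤ 2 * d := hdeg

noncomputable def poissonDenom (q t : ℝ) : ℝ := 1 - 2 * q * cos t + q ^ 2

theorem poissonDenom_pos {q : ℝ} (hq : |q| ≠ 1) (t : ℝ) : 0 < poissonDenom q t := by
  have hcos : q * cos t ≤ |q| := by
    refine (le_abs_self _).trans ?_
    rw [abs_mul]
    exact mul_le_of_le_one_right (abs_nonneg q) (abs_cos_le_one t)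
  have hsq : 0 < (1 - |q|) ^ 2 := by
    have : 1 - |q| ≠ 0 := sub_ne_zero.mpr (Ne.symm hq)
    positivity
  unfold poissonDenom
  nlinarith [sq_abs q]

theorem isTrigPoly_poissonDenom (q : ℝ) : IsTrigPoly 1 (poissonDenom q) := by
  have hcos : IsTrigPoly 1 cos := by simpa using IsTrigPoly.cos_nat_mul 1
  convert ((IsTrigPoly.const (1 + q ^ 2)).mono zero_le_one).add (hcos.const_mul (-(2 * q)))
    using 2 with t
  unfold poissonDenom
  ring

theorem sum_div_mul_prod_eq_sum_mul_prod_erase {ι 𝕜 : Type*} [Field 𝕜] [DecidableEq ι]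
    (s : Finset ι) (a D : ι → 𝕜) (hD : ∀ i ∈ s, D i ≠ 0) :
    (∑ i ∈ s, a i / D i) * ∏ i ∈ s, D i = ∑ i ∈ s, a i * ∏ j ∈ s.erase i, D j := by
  rw [sum_mul]
  refine sum_congr rfl fun i hi => ?_
  rw [← mul_prod_erase s D hi]
  field_simp [hD i hi]

theorem isTrigPoly_sum_sin_div_poissonDenom_mul_prod {ι : Type*} (s : Finset ι) (c q : ι → ℝ)
    (hq : ∀ i ∈ s, |q i| ≠ 1) :
    IsTrigPoly s.card fun t =>
      (∑ i ∈ s, c i * sin t / poissonDenom (q i) t) * ∏ i ∈ s, poissonDenom (q i) t := by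
  classical
  have hsin : IsTrigPoly 1 sin := by simpa using IsTrigPoly.sin_nat_mul 1
  simp_rw [sum_div_mul_prod_eq_sum_mul_prod_erase s _ _
    fun i hi => (poissonDenom_pos (hq i hi) _).ne', mul_assoc]
  refine IsTrigPoly.sum s fun i hi => .const_mul (c i) ?_
  have hprod := IsTrigPoly.prod (s.erase i) fun j _ => isTrigPoly_poissonDenom (q j)
  rw [sum_const, smul_eq_mul, mul_one] at hprod
  exact (hsin.mul hprod).mono (by rw [add_comm, card_erase_add_one hi])

theorem isTrigPoly_fourierSum (N : ℕ) (a b : ℕ → ℝ) :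
    IsTrigPoly N fun t => a 0 / 2 + ∑ j ∈ Icc 1 N, (a j * cos (j * t) + b j * sin (j * t)) := by
  refine ((IsTrigPoly.const _).mono N.zero_le).add (IsTrigPoly.sum _ fun j hj => ?_)
  exact ((IsTrigPoly.cos_nat_mul j).const_mul (a j)).add
    ((IsTrigPoly.sin_nat_mul j).const_mul (b j)) |>.mono (mem_Icc.mp hj).2

theorem stmt7_general (n m : ℕ) (hn : 1 ≤ n) (q α : ℕ → ℝ)
    (hq01 : ∀ i ∈ Finset.Icc 1 m, 0 < q i ∧ q i < 1)
    (a b : ℕ → ℝ)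
    (K T : ℝ → ℝ)
    (hK : ∀ t, K t = ∑ i ∈ Finset.Icc 1 m,
        α i * q i * Real.sin t / (1 - 2 * q i * Real.cos t + q i ^ 2))
    (hT : ∀ t, T t = a 0 / 2 + ∑ j ∈ Finset.Icc 1 (n - 1),
        (a j * Real.cos (j * t) + b j * Real.sin (j * t)))
    (hne : ∃ t, K t - T t ≠ 0) :
    {t ∈ Set.Ico (0 : ℝ) (2 * π) | K t - T t = 0}.Finite ∧
      {t ∈ Set.Ico (0 : ℝ) (2 * π) | K t - T t = 0}.ncard ≤ 2 * (n + m - 1) := by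
  have hq : ∀ i ∈ Icc 1 m, |q i| ≠ 1 := fun i hi => by
    rw [abs_of_pos (hq01 i hi).1]; exact (hq01 i hi).2.ne
  set P := fun t => ∏ i ∈ Icc 1 m, poissonDenom (q i) t
  have hKP : IsTrigPoly (n + m - 1) fun t => K t * P t := by
    obtain rfl : K = _ := funext hK
    exact (isTrigPoly_sum_sin_div_poissonDenom_mul_prod _ (fun i => α i * q i) q hq).mono
      (by rw [Nat.card_Icc]; omega)
  have hTP : IsTrigPoly (n + m - 1) fun t => T t * P t := by
    obtain rfl : T = _ := funext hT
    have := (isTrigPoly_fourierSum (n - 1) a b).mul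
      (IsTrigPoly.prod (Icc 1 m) fun i _ => isTrigPoly_poissonDenom (q i))
    exact this.mono (by simp only [sum_const, Nat.card_Icc, smul_eq_mul, mul_one]; omega)
  have hF : IsTrigPoly (n + m - 1) fun t => (K t - T t) * P t := by
    convert hKP.add (hTP.const_mul (-1)) using 2
    ring
  have hP : ∀ t, P t ≠ 0 := fun t => (prod_pos fun i hi => poissonDenom_pos (hq i hi) t).ne'
  obtain ⟨t₀, ht₀⟩ := hne
  simpa only [mul_eq_zero, hP, or_false] using
    hF.finite_zeros_and_ncard_le fun h => mul_ne_zero ht₀ (hP t₀) (congrFun h t₀)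

theorem stmt7 (n m : ℕ) (hn : 1 ≤ n) (hm : 2 ≤ m) (q α : ℕ → ℝ)
    (hq01 : ∀ i ∈ Finset.Icc 1 m, 0 < q i ∧ q i < 1)
    (hinc : ∀ i j, 1 ≤ i → i < j → j ≤ m → q i < q j)
    (hα : ∃ i ∈ Finset.Icc 1 m, α i ≠ 0)
    (a b : ℕ → ℝ)
    (K T : ℝ → ℝ)
    (hK : ∀ t, K t = ∑ i ∈ Finset.Icc 1 m,
        α i * q i * Real.sin t / (1 - 2 * q i * Real.cos t + q i ^ 2))
    (hT : ∀ t, T t = a 0 / 2 + ∑ j ∈ Finset.Icc 1 (n - 1),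
        (a j * Real.cos (j * t) + b j * Real.sin (j * t)))
    (hne : ∃ t, K t - T t ≠ 0) :
    {t ∈ Set.Ico (0 : ℝ) (2 * π) | K t - T t = 0}.Finite ∧
      {t ∈ Set.Ico (0 : ℝ) (2 * π) | K t - T t = 0}.ncard ≤ 2 * (n + m - 1) :=
  stmt7_general n m hn q α hq01 a b K T hK hT hne
end

section
/- Let n ∈ ℕ, n ≥ 2, and let t_1 < t_2 < ... < t_{n−1} be distinct points in the open interval (0, π). For any function f : ℝ → ℝ that is odd and 2π-periodic, there exists an odd trigonometric polynomial T(t) = Σ_{j=1}^{n−1} b_j sin(jt) of degree at most n − 1 such that T(t_k) = f(t_k) for all k = 1, ..., n − 1. -/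
open Finset Real

lemma sin_j_mul_cos (j : ℕ) (x : ℝ) :
    Real.sin (j * x) * Real.cos x
      = (Real.sin (((j : ℝ) + 1) * x) + Real.sin (((j : ℝ) - 1) * x)) / 2 := by
  rw [show ((j:ℝ)+1)*x = j*x + x by ring, show ((j:ℝ)-1)*x = j*x - x by ring,
    Real.sin_add, Real.sin_sub]
  ring

lemma sin_mul_cos_pow (i : ℕ) : ∃ b : ℕ → ℝ,
    (∀ j, j = 0 ∨ i + 2 ≤ j → b j = 0) ∧
    ∀ x : ℝ, Real.sin x * Real.cos x ^ i
      = ∑ j ∈ Finset.range (i + 2), b j * Real.sin (j * x) := by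
  induction i with
  | zero =>
    refine ⟨fun j => if j = 1 then 1 else 0, ?_, ?_⟩
    · rintro j (rfl | hj)
      · simp
      · simp only [ite_eq_right_iff]; omega
    · intro x
      norm_num [Finset.sum_range_succ]
  | succ i ih =>
    obtain ⟨b, hb, h⟩ := ih
    have hb0 : b 0 = 0 := hb 0 (Or.inl rfl)
    refine ⟨fun j => if j = 0 then 0 else (b (j-1) + b (j+1))/2, ?_, ?_⟩
    · rintro j (rfl | hj)
      · simp
      · have h1 : b (j - 1) = 0 := hb _ (Or.inr (by omega))
        have h2 : b (j + 1) = 0 := hb _ (Or.inr (by omega))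
        simp [h1, h2]
    · intro x
      have key : Real.sin x * Real.cos x ^ (i+1)
          = ∑ j ∈ Finset.range (i + 2),
              (b j / 2 * Real.sin (((j:ℝ)+1) * x) + b j / 2 * Real.sin (((j:ℝ)-1) * x)) := by
        rw [pow_succ, ← mul_assoc, h x, Finset.sum_mul]
        refine Finset.sum_congr rfl fun j _ => ?_
        rw [mul_assoc, sin_j_mul_cos]
        ring
      rw [key, Finset.sum_add_distrib]
      -- second sum
      have e2 : ∑ j ∈ Finset.range (i + 2), b j / 2 * Real.sin (((j:ℝ)-1) * x)
          = ∑ j ∈ Finset.range (i + 1), b (j+1) / 2 * Real.sin (j * x) := by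
        rw [Finset.sum_range_succ']
        simp only [hb0]
        norm_num
      have e2' : ∑ j ∈ Finset.range (i + 1), b (j+1) / 2 * Real.sin (j * x)
          = ∑ j ∈ Finset.range (i + 3), b (j+1) / 2 * Real.sin (j * x) := by
        refine Finset.sum_subset (Finset.range_subset_range.2 (by omega)) fun j _ hj => ?_
        have : b (j+1) = 0 := hb _ (Or.inr (by simp at hj; omega))
        simp [this]
      have e2'' : ∑ j ∈ Finset.range (i + 3), b (j+1) / 2 * Real.sin (j * x)
          = ∑ j ∈ Finset.range (i + 2), b (j+2) / 2 * Real.sin (((j:ℝ)+1) * x) := by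
        rw [Finset.sum_range_succ']
        norm_num
      have e3 : ∑ j ∈ Finset.range (i + 3),
            (if j = 0 then (0:ℝ) else (b (j-1) + b (j+1))/2) * Real.sin (j * x)
          = ∑ j ∈ Finset.range (i + 2), (b j + b (j+2))/2 * Real.sin (((j:ℝ)+1) * x) := by
        rw [Finset.sum_range_succ']
        norm_num
      rw [e3, e2.trans (e2'.trans e2''), ← Finset.sum_add_distrib]
      exact Finset.sum_congr rfl fun j _ => by ring

theorem stmt9 (n : ℕ) (hn : 2 ≤ n) (t : ℕ → ℝ)
    (ht : ∀ k ∈ Finset.Icc 1 (n - 1), t k ∈ Set.Ioo 0 π)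
    (hmono : ∀ k l, 1 ≤ k → k < l → l ≤ n - 1 → t k < t l)
    (f : ℝ → ℝ) (hodd : ∀ x, f (-x) = -f x) (hper : ∀ x, f (x + 2 * π) = f x) :
    ∃ b : ℕ → ℝ, ∀ k ∈ Finset.Icc 1 (n - 1),
      ∑ j ∈ Finset.Icc 1 (n - 1), b j * Real.sin (j * t k) = f (t k) := by
  set m := n - 1 with hm
  have hm1 : 1 ≤ m := by omega
  have htm : ∀ i : Fin m, t (i + 1) ∈ Set.Ioo 0 π := by
    intro i
    exact ht _ (Finset.mem_Icc.2 ⟨by omega, by omega⟩)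
  -- the matrix
  set W : Matrix (Fin m) (Fin m) ℝ :=
    Matrix.of fun k i => Real.sin (t (k + 1)) * Real.cos (t (k + 1)) ^ (i : ℕ) with hW
  have hdet : W.det ≠ 0 := by
    rw [hW]
    have : (Matrix.of fun (k i : Fin m) =>
        Real.sin (t (k + 1)) * Real.cos (t (k + 1)) ^ (i : ℕ))
        = Matrix.of fun k i => (fun l : Fin m => Real.sin (t (l + 1))) k *
            (Matrix.vandermonde fun l : Fin m => Real.cos (t (l + 1))) k i := by
      ext k i
      simp [Matrix.vandermonde]
    rw [this, Matrix.det_mul_column]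
    refine mul_ne_zero ?_ ?_
    · rw [Finset.prod_ne_zero_iff]
      intro k _
      exact ne_of_gt (Real.sin_pos_of_pos_of_lt_pi (htm k).1 (htm k).2)
    · rw [Matrix.det_vandermonde_ne_zero_iff]
      intro k l hkl
      by_contra hne
      rcases Ne.lt_or_gt hne with hlt | hlt
      · have := hmono (k + 1) (l + 1) (by omega) (by omega) (by omega)
        have := Real.strictAntiOn_cos
          (Set.mem_Icc.2 ⟨le_of_lt (htm k).1, le_of_lt (htm k).2⟩)
          (Set.mem_Icc.2 ⟨le_of_lt (htm l).1, le_of_lt (htm l).2⟩) this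
        exact absurd hkl (ne_of_gt this)
      · have := hmono (l + 1) (k + 1) (by omega) (by omega) (by omega)
        have := Real.strictAntiOn_cos
          (Set.mem_Icc.2 ⟨le_of_lt (htm l).1, le_of_lt (htm l).2⟩)
          (Set.mem_Icc.2 ⟨le_of_lt (htm k).1, le_of_lt (htm k).2⟩) this
        exact absurd hkl (ne_of_lt this)
  -- solve the linear system
  set y : Fin m → ℝ := fun k => f (t (k + 1)) with hy
  set c : Fin m → ℝ := W⁻¹.mulVec y with hc
  have hsol : W.mulVec c = y := by
    rw [hc, Matrix.mulVec_mulVec, Matrix.mul_nonsing_inv _ (isUnit_iff_ne_zero.2 hdet),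
      Matrix.one_mulVec]
  -- coefficients for sin x * cos x ^ i
  choose B hB0 hBid using sin_mul_cos_pow
  refine ⟨fun j => ∑ i : Fin m, c i * B i j, ?_⟩
  intro k hk
  rw [Finset.mem_Icc] at hk
  have hk1 : 1 ≤ k := hk.1
  set k' : Fin m := ⟨k - 1, by omega⟩ with hk'
  have htk : t (k' + 1) = t k := by
    congr 1
    simp [hk']
    omega
  have step1 : ∀ i : Fin m,
      ∑ j ∈ Finset.Icc 1 m, B i j * Real.sin (j * t k)
        = Real.sin (t k) * Real.cos (t k) ^ (i : ℕ) := by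
    intro i
    have h1 : ∑ j ∈ Finset.Icc 1 m, B i j * Real.sin (j * t k)
        = ∑ j ∈ Finset.range (m + 1), B i j * Real.sin (j * t k) := by
      refine Finset.sum_subset ?_ ?_
      · intro j hj
        rw [Finset.mem_Icc] at hj
        exact Finset.mem_range.2 (by omega)
      · intro j hj1 hj2
        rw [Finset.mem_range] at hj1
        rw [Finset.mem_Icc] at hj2
        have : j = 0 := by omega
        subst this
        simp
    have h2 : ∑ j ∈ Finset.range ((i : ℕ) + 2), B i j * Real.sin (j * t k)
        = ∑ j ∈ Finset.range (m + 1), B i j * Real.sin (j * t k) := by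
      refine Finset.sum_subset (Finset.range_subset_range.2 (by omega)) ?_
      intro j _ hj2
      rw [Finset.mem_range] at hj2
      rw [hB0 i j (Or.inr (by omega))]
      simp
    rw [h1, ← h2, ← hBid i (t k)]
  calc ∑ j ∈ Finset.Icc 1 m, (∑ i : Fin m, c i * B i j) * Real.sin (j * t k)
      = ∑ i : Fin m, c i * ∑ j ∈ Finset.Icc 1 m, B i j * Real.sin (j * t k) := by
        simp_rw [Finset.sum_mul]
        rw [Finset.sum_comm]
        refine Finset.sum_congr rfl fun i _ => ?_
        rw [Finset.mul_sum]
        refine Finset.sum_congr rfl fun j _ => ?_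
        ring
    _ = ∑ i : Fin m, c i * (Real.sin (t k) * Real.cos (t k) ^ (i : ℕ)) := by
        refine Finset.sum_congr rfl fun i _ => ?_
        rw [step1 i]
    _ = W.mulVec c k' := by
        rw [Matrix.mulVec]
        simp only [dotProduct, hW, Matrix.of_apply, htk]
        exact Finset.sum_congr rfl fun i _ => by ring
    _ = f (t k) := by rw [hsol, hy]; simp only [htk]
end

section
/- Let n, m ∈ ℕ with n ≥ 1, m ≥ 1, and let K_1, ..., K_m : ℝ → ℝ be odd 2π-periodic functions, each continuous on (0, 2π). Let t_1 < ... < t_{n+m−2} be distinct points in (0, π) (assume n + m ≥ 3). Then there exist reals α_1, ..., α_m, not all zero, and an odd trigonometric polynomial T of degree at most n − 1, such that Σ_{i=1}^m α_i K_i(t_k) = T(t_k) for every k = 1, ..., n + m − 2. -/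
/-!
Write `sin (j x) = U_{j-1}(cos x) sin x` with the Chebyshev polynomials of the second kind. A
sine polynomial of degree at most `p` vanishing at `p` distinct points of `(0, π)` then gives a
polynomial of degree `< p` with `p` distinct roots `cos tₖ`, so the `p` sine vectors sampled at
these points are linearly independent. With `p = n - 1` and `N = n + m - 2`, together with the
`m` vectors `(K_i(t_k))_k` they form more than `N` vectors in `ℝ^N`; a nontrivial linear relation
among them cannot involve the sine vectors alone, so it expresses a nonzero combination of the
`K_i` as a sine polynomial.
-/

open Finset Real Polynomial Module

noncomputable def chebyshevUSequence : Polynomial.Sequence ℝ where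
  elems' i := Chebyshev.U ℝ i
  degree_eq' := Chebyshev.degree_U_natCast ℝ

theorem exists_ne_zero_sum_smul_eq_sum_smul {K V ι κ : Type*} [Field K] [AddCommGroup V]
    [Module K V] [FiniteDimensional K V] [Fintype ι] [Fintype κ] (v : ι → V) {s : κ → V}
    (hs : LinearIndependent K s) (hcard : finrank K V < Fintype.card ι + Fintype.card κ) :
    ∃ (α : ι → K) (c : κ → K), α ≠ 0 ∧ ∑ i, α i • v i = ∑ j, c j • s j := by
  have hdep : ¬ LinearIndependent K (Sum.elim v s) := fun h =>
    hcard.not_ge (by simpa using h.fintype_card_le_finrank)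
  obtain ⟨g, hg, x, hx⟩ := Fintype.not_linearIndependent_iff.mp hdep
  rw [Fintype.sum_sum_type] at hg
  simp only [Sum.elim_inl, Sum.elim_inr] at hg
  refine ⟨g ∘ Sum.inl, -(g ∘ Sum.inr), fun hα => ?_, ?_⟩
  · have hα' : ∀ i, g (Sum.inl i) = 0 := congrFun hα
    simp only [hα', zero_smul, sum_const_zero, zero_add] at hg
    rcases x with i | j
    · exact hx (hα' i)
    · exact hx (Fintype.linearIndependent_iff.mp hs _ hg j)
  · simp only [Function.comp_apply, Pi.neg_apply, neg_smul, sum_neg_distrib]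
    exact eq_neg_of_add_eq_zero_left hg

theorem linearIndependent_sin_nat_mul {κ : Type*} [Fintype κ] {θ : κ → ℝ}
    (hθ : Function.Injective θ) (hθπ : ∀ k, θ k ∈ Set.Ioo 0 π) {p : ℕ}
    (hp : p ≤ Fintype.card κ) :
    LinearIndependent ℝ fun (j : Icc 1 p) (k : κ) => sin (j * θ k) := by
  rw [Fintype.linearIndependent_iff]
  intro g hg j₀
  set P := ∑ j : Icc 1 p, g j • chebyshevUSequence ((j : ℕ) - 1)
  have hsin : ∀ (j : Icc 1 p) (x : ℝ),
      (chebyshevUSequence ((j : ℕ) - 1)).eval (cos x) * sin x = sin (j * x) := by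
    intro j x
    have hj : 1 ≤ (j : ℕ) := (mem_Icc.mp j.2).1
    change (Chebyshev.U ℝ ((j - 1 : ℕ) : ℤ)).eval (cos x) * sin x = _
    rw [Chebyshev.U_real_cos]
    push_cast [Nat.cast_sub hj]
    ring_nf
  have hroot : ∀ k, P.eval (cos (θ k)) = 0 := by
    intro k
    have hpos : 0 < sin (θ k) := sin_pos_of_pos_of_lt_pi (hθπ k).1 (hθπ k).2
    refine (mul_eq_zero.mp ?_).resolve_right hpos.ne'
    simpa [P, eval_finsetSum, sum_mul, mul_assoc, hsin] using congrFun hg k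
  have hP : P = 0 := by
    refine eq_zero_of_natDegree_lt_card_of_eval_eq_zero P
      (fun a b h => hθ (injOn_cos (Set.Ioo_subset_Icc_self (hθπ a))
        (Set.Ioo_subset_Icc_self (hθπ b)) h)) hroot ?_
    have := mem_Icc.mp j₀.2
    calc P.natDegree ≤ p - 1 := natDegree_sum_le_of_forall_le _ _ fun j _ =>
          (natDegree_smul_le _ _).trans <| by
            have := mem_Icc.mp j.2
            rw [Sequence.natDegree_eq]; omega
      _ < Fintype.card κ := by omega
  have hU : LinearIndependent ℝ fun j : Icc 1 p => chebyshevUSequence ((j : ℕ) - 1) :=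
    chebyshevUSequence.linearIndependent.comp _ fun a b h => by
      have := mem_Icc.mp a.2; have := mem_Icc.mp b.2; exact Subtype.ext (by omega)
  exact Fintype.linearIndependent_iff.mp hU g hP j₀

theorem sum_extend_val_mul {R : Type*} [CommSemiring R] (s : Finset ℕ) (a : s → R)
    (f : ℕ → R) : ∑ i ∈ s, Function.extend Subtype.val a 0 i * f i = ∑ i : s, a i * f i := by
  rw [← sum_coe_sort s]
  simp only [Subtype.val_injective.extend_apply]

theorem stmt12_general (n m : ℕ) (hm : 1 ≤ m)
    (K : ℕ → ℝ → ℝ)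
    (t : ℕ → ℝ)
    (ht : ∀ k ∈ Finset.Icc 1 (n + m - 2), t k ∈ Set.Ioo 0 π)
    (hmono : ∀ k l, 1 ≤ k → k < l → l ≤ n + m - 2 → t k < t l) :
    ∃ α b : ℕ → ℝ, (∃ i ∈ Finset.Icc 1 m, α i ≠ 0) ∧
      ∀ k ∈ Finset.Icc 1 (n + m - 2),
        ∑ i ∈ Finset.Icc 1 m, α i * K i (t k) =
          ∑ j ∈ Finset.Icc 1 (n - 1), b j * Real.sin (j * t k) := by
  have hinj : Function.Injective fun k : Icc 1 (n + m - 2) => t k :=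
    Set.injOn_iff_injective.mp (StrictMonoOn.injOn fun k hk l hl hkl =>
      hmono k l (mem_Icc.mp hk).1 hkl (mem_Icc.mp hl).2)
  have hsin := linearIndependent_sin_nat_mul hinj (fun k => ht k k.2) (p := n - 1)
    (by rw [Fintype.card_coe, Nat.card_Icc]; omega)
  obtain ⟨α, c, hα, hsum⟩ := exists_ne_zero_sum_smul_eq_sum_smul
    (fun (i : Icc 1 m) (k : Icc 1 (n + m - 2)) => K i (t k)) hsin
    (by simp only [finrank_fintype_fun_eq_card, Fintype.card_coe, Nat.card_Icc]; omega)
  refine ⟨Function.extend Subtype.val α 0, Function.extend Subtype.val c 0, ?_, fun k hk => ?_⟩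
  · obtain ⟨i, hi⟩ := Function.ne_iff.mp hα
    exact ⟨i, i.2, by rwa [Subtype.val_injective.extend_apply]⟩
  · simpa [sum_extend_val_mul, Finset.sum_apply] using congrFun hsum ⟨k, hk⟩

theorem stmt12 (n m : ℕ) (hn : 1 ≤ n) (hm : 1 ≤ m) (hnm : 3 ≤ n + m)
    (K : ℕ → ℝ → ℝ)
    (hodd : ∀ i ∈ Finset.Icc 1 m, ∀ x, K i (-x) = -K i x)
    (hper : ∀ i ∈ Finset.Icc 1 m, ∀ x, K i (x + 2 * π) = K i x)
    (hcont : ∀ i ∈ Finset.Icc 1 m, ContinuousOn (K i) (Set.Ioo 0 (2 * π)))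
    (t : ℕ → ℝ)
    (ht : ∀ k ∈ Finset.Icc 1 (n + m - 2), t k ∈ Set.Ioo 0 π)
    (hmono : ∀ k l, 1 ≤ k → k < l → l ≤ n + m - 2 → t k < t l) :
    ∃ α b : ℕ → ℝ, (∃ i ∈ Finset.Icc 1 m, α i ≠ 0) ∧
      ∀ k ∈ Finset.Icc 1 (n + m - 2),
        ∑ i ∈ Finset.Icc 1 m, α i * K i (t k) =
          ∑ j ∈ Finset.Icc 1 (n - 1), b j * Real.sin (j * t k) :=
  stmt12_general n m hm K t ht hmono
end
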